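/- The Jacobian determinant of $(z_1,\ldots,z_d)$ with respect to $(t_1,\ldots,t_d)$ satisfies $\det\big[\frac{\partial(z_1,\ldots,z_d)}{\partial(t_1,\ldots,t_d)}\big] = \prod_{k=1}^d \frac{2\pi i}{\binom{d+1}{k}} \cdot \prod_{1 \le \mu < \nu \le d+1}\big(e^{2\pi i t_\mu} - e^{2\pi i t_\nu}\big)$, where $t_{d+1} = -(t_1 + \cdots + t_d)$. -/

import Mathlib

open Real Complex

/-- `z_k` (for `k = 1, …, d`, here 0-indexed) as a function of the free variables
`t_1, …, t_d`, with `t_{d+1} = -(t_1 + ⋯ + t_d)`: the normalized `k`-th elementary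
symmetric polynomial of `e^{2πi t_1}, …, e^{2πi t_{d+1}}`. -/
noncomputable def zFun (d : ℕ) (k : Fin d) (s : Fin d → ℝ) : ℂ :=
  (1 / (Nat.choose (d + 1) ((k : ℕ) + 1) : ℂ)) *
    ∑ J ∈ (Finset.univ : Finset (Fin (d + 1))).powersetCard ((k : ℕ) + 1),
      Complex.exp (2 * π * Complex.I *
        ((∑ j ∈ J, (Fin.snoc s (-(∑ i, s i)) : Fin (d + 1) → ℝ) j : ℝ) : ℂ))

/-!
Write `w_j = e^{2πi t_j}` and `ŵ_a` for the family `w` with `w_a` removed. Since `t_{d+1}`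
depends on `t_l` with coefficient `-1`, the chain rule gives
`∂z_{k+1}/∂t_l = 2πi / C(d+1,k+1) ⬝ (w_l e_k(ŵ_l) - w_{d+1} e_k(ŵ_{d+1}))`.
Iterating `e_{m+1}(w) = e_{m+1}(ŵ_a) + w_a e_m(ŵ_a)` yields
`w_a e_k(ŵ_a) = ∑_{r ≤ k} (-1)^r e_{k-r}(w) w_a^{r+1}`, so the matrix of the bracketed terms
is a triangular matrix with diagonal `±1` times `(w_l^{r+1} - w_{d+1}^{r+1})_{r,l}`.
Subtracting the last row of the Vandermonde matrix of `w` from the others and expanding along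
the first column shows that the latter has determinant `(-1)^d` times the Vandermonde
determinant.
-/

open Finset

namespace Multiset

variable {R : Type*}

theorem esymm_cons_succ [CommSemiring R] (a : R) (s : Multiset R) (m : ℕ) :
    (a ::ₘ s).esymm (m + 1) = s.esymm (m + 1) + a * s.esymm m := by
  simp [esymm, powersetCard_cons, sum_map_mul_left]

theorem mul_esymm_eq_sum [CommRing R] (a : R) (s : Multiset R) (m : ℕ) :
    a * s.esymm m =
      ∑ r ∈ Finset.range (m + 1), (-1) ^ r * (a ::ₘ s).esymm (m - r) * a ^ (r + 1) := by
  induction m with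
  | zero => simp [esymm]
  | succ m ih =>
    have hs : s.esymm (m + 1) = (a ::ₘ s).esymm (m + 1) - a * s.esymm m := by
      rw [esymm_cons_succ]; ring
    rw [Finset.sum_range_succ', hs, mul_sub, ih, Finset.mul_sum]
    simp only [Nat.add_sub_add_right, Nat.sub_zero]
    rw [sub_eq_neg_add, ← Finset.sum_neg_distrib]
    congr 1
    · exact Finset.sum_congr rfl fun r _ => by ring
    · ring

end Multiset

namespace Finset

variable {ι : Type*} [DecidableEq ι]

theorem map_val_eq_cons_erase {α : Type*} (f : ι → α) {s : Finset ι} {a : ι} (ha : a ∈ s) :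
    s.val.map f = f a ::ₘ (s.erase a).val.map f := by
  rw [← Multiset.map_cons, ← insert_val_of_notMem (notMem_erase a s), insert_erase ha]

theorem filter_notMem_powersetCard (s : Finset ι) (a : ι) (n : ℕ) :
    (s.powersetCard n).filter (a ∉ ·) = (s.erase a).powersetCard n := by
  ext J
  simp only [mem_filter, mem_powersetCard, subset_erase]
  tauto

theorem sum_filter_mem_powersetCard_prod {R : Type*} [CommRing R] (w : ι → R) {s : Finset ι}
    {a : ι} (ha : a ∈ s) (m : ℕ) :
    ∑ J ∈ (s.powersetCard (m + 1)).filter (a ∈ ·), ∏ j ∈ J, w j =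
      w a * ((s.erase a).val.map w).esymm m := by
  have hsplit := sum_filter_add_sum_filter_not (s.powersetCard (m + 1)) (a ∈ ·)
    fun J => ∏ j ∈ J, w j
  simp only [filter_notMem_powersetCard, ← esymm_map_val] at hsplit
  rw [map_val_eq_cons_erase w ha, Multiset.esymm_cons_succ] at hsplit
  linear_combination hsplit

end Finset

section Determinant

open Matrix

variable {R : Type*} [CommRing R]

theorem prod_sub_of_lt_eq_mul_det_vandermonde {n : ℕ} (w : Fin n → R) :
    ∏ p ∈ univ.filter (fun p : Fin n × Fin n => p.1 < p.2), (w p.1 - w p.2) =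
      (∏ i : Fin n, (-1 : R) ^ (i : ℕ)) * (vandermonde w).det := by
  have hpairs : ∏ p ∈ univ.filter (fun p : Fin n × Fin n => p.1 < p.2), (w p.1 - w p.2) =
      ∏ i : Fin n, ∏ j ∈ Ioi i, (w i - w j) := by
    rw [prod_filter, Fintype.prod_prod_type]
    refine prod_congr rfl fun i _ => ?_
    rw [← prod_filter]
    congr 1
    ext j
    simp
  have hrev : ∏ i : Fin n, (-1 : R) ^ (n - 1 - i : ℕ) = ∏ i : Fin n, (-1 : R) ^ (i : ℕ) :=
    Fintype.prod_equiv Fin.revPerm _ _ fun i => by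
      rw [Fin.revPerm_apply, Fin.val_rev]
      congr 1
      omega
  rw [hpairs, det_vandermonde, ← hrev, ← prod_mul_distrib]
  refine prod_congr rfl fun i _ => ?_
  rw [← Fin.card_Ioi, ← prod_const, ← prod_mul_distrib]
  exact prod_congr rfl fun j _ => by ring

variable {d : ℕ}

def powSubLastMatrix (w : Fin (d + 1) → R) : Matrix (Fin d) (Fin d) R :=
  of fun r l => w l.castSucc ^ ((r : ℕ) + 1) - w (Fin.last d) ^ ((r : ℕ) + 1)

theorem det_powSubLastMatrix (w : Fin (d + 1) → R) :
    (powSubLastMatrix w).det = (-1) ^ d * (vandermonde w).det := by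
  set A : Matrix (Fin (d + 1)) (Fin (d + 1)) R := of fun i j =>
    if i = Fin.last d then w i ^ (j : ℕ) else w i ^ (j : ℕ) - w (Fin.last d) ^ (j : ℕ)
  have hrow : (vandermonde w).det = A.det := by
    refine (det_eq_of_forall_row_eq_smul_add_const (fun i => if i = Fin.last d then 0 else -1)
      (Fin.last d) (if_pos rfl) fun i j => ?_).symm
    by_cases hi : i = Fin.last d <;> simp [A, hi, sub_eq_add_neg]
  have hminor : A.submatrix (Fin.last d).succAbove Fin.succ = (powSubLastMatrix w)ᵀ := by
    ext l r
    simp [A, powSubLastMatrix, (Fin.castSucc_lt_last l).ne]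
  rw [hrow, det_succ_column_zero, sum_eq_single (Fin.last d), hminor, det_transpose]
  · simp [A, ← mul_assoc, ← pow_add, ← two_mul, pow_mul]
  · intro i _ hi
    simp [A, hi]
  · simp

def signedEsymmMatrix (w : Fin (d + 1) → R) : Matrix (Fin d) (Fin d) R :=
  of fun k r => if r ≤ k then (-1) ^ (r : ℕ) * (univ.val.map w).esymm (k - r) else 0

theorem det_signedEsymmMatrix (w : Fin (d + 1) → R) :
    (signedEsymmMatrix w).det = ∏ k : Fin d, (-1) ^ (k : ℕ) := by
  rw [det_of_isLowerTriangular (signedEsymmMatrix w) fun k r (hkr : k < r) => if_neg hkr.not_ge]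
  simp [signedEsymmMatrix, Multiset.esymm]

theorem mul_esymm_erase_eq_sum_signedEsymmMatrix (w : Fin (d + 1) → R) (a : Fin (d + 1))
    (k : Fin d) :
    w a * ((univ.erase a).val.map w).esymm k =
      ∑ r, signedEsymmMatrix w k r * w a ^ ((r : ℕ) + 1) := by
  simp only [signedEsymmMatrix, of_apply, Fin.le_iff_val_le_val]
  rw [Multiset.mul_esymm_eq_sum, ← map_val_eq_cons_erase w (mem_univ a),
    Fin.sum_univ_eq_sum_range
      (fun r => (if r ≤ k then (-1) ^ r * (univ.val.map w).esymm (k - r) else 0) * w a ^ (r + 1)),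
    ← sum_range_add_sum_Ico _ k.isLt, sum_eq_zero (s := Ico _ _) fun r hr => ?_, add_zero]
  · exact sum_congr rfl fun r hr => by rw [if_pos (Nat.lt_succ_iff.mp (mem_range.mp hr))]
  · rw [if_neg (by simp at hr; omega), zero_mul]

def esymmJacobian (w : Fin (d + 1) → R) : Matrix (Fin d) (Fin d) R :=
  of fun k l => w l.castSucc * ((univ.erase l.castSucc).val.map w).esymm k -
    w (Fin.last d) * ((univ.erase (Fin.last d)).val.map w).esymm k

theorem esymmJacobian_eq_mul (w : Fin (d + 1) → R) :
    esymmJacobian w = signedEsymmMatrix w * powSubLastMatrix w := by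
  ext k l
  simp only [esymmJacobian, powSubLastMatrix, of_apply, mul_apply, mul_sub, sum_sub_distrib,
    mul_esymm_erase_eq_sum_signedEsymmMatrix]

theorem det_esymmJacobian (w : Fin (d + 1) → R) :
    (esymmJacobian w).det =
      ∏ p ∈ univ.filter (fun p : Fin (d + 1) × Fin (d + 1) => p.1 < p.2), (w p.1 - w p.2) := by
  rw [esymmJacobian_eq_mul, det_mul, det_signedEsymmMatrix, det_powSubLastMatrix,
    prod_sub_of_lt_eq_mul_det_vandermonde, Fin.prod_univ_castSucc]
  simp only [Fin.val_castSucc, Fin.val_last]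
  ring

end Determinant

section Derivative

noncomputable def zeroSumExtension (d : ℕ) : (Fin d → ℝ) →L[ℝ] (Fin (d + 1) → ℝ) :=
  ContinuousLinearMap.pi
    (Fin.snoc (fun i => ContinuousLinearMap.proj i) (-∑ i, ContinuousLinearMap.proj i))

theorem zeroSumExtension_apply (d : ℕ) (s : Fin d → ℝ) :
    zeroSumExtension d s = Fin.snoc s (-∑ i, s i) := by
  ext j
  induction j using Fin.lastCases <;> simp [zeroSumExtension]

theorem zeroSumExtension_single (d : ℕ) (l : Fin d) :
    zeroSumExtension d (Pi.single l 1) = Pi.single l.castSucc 1 - Pi.single (Fin.last d) 1 := by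
  ext j
  induction j using Fin.lastCases with
  | last => simp [zeroSumExtension_apply, (Fin.castSucc_lt_last l).ne']
  | cast i => simp [zeroSumExtension_apply, Pi.single_apply, (Fin.castSucc_lt_last i).ne]

theorem hasFDerivAt_cexp_mul_ofReal {E : Type*} [NormedAddCommGroup E] [NormedSpace ℝ E]
    (c : ℂ) (φ : E →L[ℝ] ℝ) (x : E) :
    HasFDerivAt (fun u => cexp (c * φ u)) ((cexp (c * φ x) * c) • (ofRealCLM ∘L φ)) x := by
  have hlin : HasFDerivAt (fun u => c * (φ u : ℂ)) (c • (ofRealCLM ∘L φ)) x :=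
    (ofRealCLM ∘L φ).hasFDerivAt.const_mul c
  simpa [smul_smul, mul_comm] using hlin.cexp

theorem hasFDerivAt_zFun (d : ℕ) (k : Fin d) (s : Fin d → ℝ) :
    HasFDerivAt (zFun d k)
      ((1 / ((d + 1).choose (k + 1) : ℂ)) • ∑ J ∈ univ.powersetCard (k + 1),
        (cexp (2 * π * I * ((∑ j ∈ J, ContinuousLinearMap.proj j) ∘L zeroSumExtension d) s) *
          (2 * π * I)) •
          (ofRealCLM ∘L (∑ j ∈ J, ContinuousLinearMap.proj j) ∘L zeroSumExtension d)) s := by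
  have hsum := HasFDerivAt.sum (u := univ.powersetCard (k + 1)) fun J _ =>
    hasFDerivAt_cexp_mul_ofReal (2 * π * I)
      ((∑ j ∈ J, ContinuousLinearMap.proj j) ∘L zeroSumExtension d) s
  refine (hsum.const_mul (1 / ((d + 1).choose (k + 1) : ℂ))).congr_of_eventuallyEq
    (.of_forall fun u => ?_)
  simp [zFun, zeroSumExtension_apply]

noncomputable def torusPoint (d : ℕ) (s : Fin d → ℝ) (j : Fin (d + 1)) : ℂ :=
  cexp (2 * π * I * ((Fin.snoc s (-(∑ i, s i)) : Fin (d + 1) → ℝ) j : ℂ))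

theorem cexp_sum_zeroSumExtension (d : ℕ) (s : Fin d → ℝ) (J : Finset (Fin (d + 1))) :
    cexp (2 * π * I * ((∑ j ∈ J, ContinuousLinearMap.proj j) ∘L zeroSumExtension d) s) =
      ∏ j ∈ J, torusPoint d s j := by
  simp [torusPoint, zeroSumExtension_apply, mul_sum, Complex.exp_sum]

theorem fderiv_zFun_single (d : ℕ) (k l : Fin d) (s : Fin d → ℝ) :
    fderiv ℝ (zFun d k) s (Pi.single l 1) =
      2 * π * I / ((d + 1).choose (k + 1) : ℂ) * esymmJacobian (torusPoint d s) k l := by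
  have hdir : ∀ J : Finset (Fin (d + 1)),
      ((∑ j ∈ J, ContinuousLinearMap.proj j) ∘L zeroSumExtension d) (Pi.single l 1) =
        (if l.castSucc ∈ J then 1 else 0) - (if Fin.last d ∈ J then 1 else 0) := by
    intro J
    simp [zeroSumExtension_single, sum_sub_distrib, Pi.single_apply]
  rw [(hasFDerivAt_zFun d k s).fderiv]
  simp only [cexp_sum_zeroSumExtension]
  simp only [_root_.smul_apply, _root_.sum_apply, ContinuousLinearMap.comp_apply, hdir]
  rw [esymmJacobian, Matrix.of_apply, ← sum_filter_mem_powersetCard_prod _ (mem_univ _),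
    ← sum_filter_mem_powersetCard_prod _ (mem_univ _), sum_filter, sum_filter, ← sum_sub_distrib,
    smul_eq_mul, mul_sum, mul_sum]
  refine sum_congr rfl fun J _ => ?_
  split_ifs <;> simp only [ofRealCLM_apply, ofReal_sub, ofReal_one, ofReal_zero] <;> ring

end Derivative

/-- The Jacobian determinant of `(z_1, …, z_d)` with respect to `(t_1, …, t_d)`:
`det[∂z/∂t] = ∏_{k=1}^d (2πi / C(d+1,k)) ⬝ ∏_{μ<ν} (e^{2πi t_μ} - e^{2πi t_ν})`. -/
theorem jacobian_z (d : ℕ) (s : Fin d → ℝ) :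
    Matrix.det (Matrix.of fun k l : Fin d =>
        fderiv ℝ (fun u : Fin d → ℝ => zFun d k u) s (Pi.single l 1)) =
      (∏ k : Fin d, 2 * π * Complex.I / (Nat.choose (d + 1) ((k : ℕ) + 1) : ℂ)) *
        ∏ p ∈ Finset.univ.filter (fun p : Fin (d + 1) × Fin (d + 1) => p.1 < p.2),
          (Complex.exp (2 * π * Complex.I *
              ((Fin.snoc s (-(∑ i, s i)) : Fin (d + 1) → ℝ) p.1 : ℂ)) -
            Complex.exp (2 * π * Complex.I *
              ((Fin.snoc s (-(∑ i, s i)) : Fin (d + 1) → ℝ) p.2 : ℂ))) := by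
  have hentries : (Matrix.of fun k l : Fin d =>
        fderiv ℝ (fun u : Fin d → ℝ => zFun d k u) s (Pi.single l 1)) =
      Matrix.of fun k l : Fin d =>
        2 * π * I / ((d + 1).choose (k + 1) : ℂ) * esymmJacobian (torusPoint d s) k l := by
    ext k l
    exact fderiv_zFun_single d k l s
  rw [hentries, Matrix.det_mul_column, det_esymmJacobian]
  rfl
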